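/- For every nonnegative integer n, 2 I_n^2 - 2^n = I_n^3, where I_n^m = \sum_{s=0}^{n} \binom{n}{s} m^s J_{n-s}. -/

import Mathlib

open Finset

/-- Stirling numbers of the second kind. -/
def stirling2 : ℕ → ℕ → ℕ
  | 0, 0 => 1
  | 0, _ + 1 => 0
  | _ + 1, 0 => 0
  | n + 1, k + 1 => (k + 1) * stirling2 n (k + 1) + stirling2 n k

/-- Fubini numbers: number of preferential arrangements of an n-set. -/
def fubini (n : ℕ) : ℕ := ∑ s ∈ range (n + 1), stirling2 n s * s.factorial

/-- Number of barred preferential arrangements of an n-set with m bars. -/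
def barred (n m : ℕ) : ℕ :=
  ∑ s ∈ range (n + 1), stirling2 n s * s.factorial * (m + s).choose m

/-- Number of restricted barred preferential arrangements. -/
def restrictedBarred (n m : ℕ) : ℕ :=
  ∑ s ∈ range (n + 1), n.choose s * m ^ s * fubini (n - s)

/-!
The exponential generating function `F` of the Fubini numbers satisfies `(2 - eˣ) F = 1`: this is
the recurrence `2 J n = ∑ₖ C(n, k) J k + [n = 0]`, obtained by summing over `k` the identity
`∑ⱼ C(n, j) σ(j, k) = σ(n, k) + σ(n, k + 1)` for the surjection numbers `σ(n, k) = S(n, k) k!`.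
Since `I^m` is the binomial convolution of `(mⁿ)` with `J`, its generating function is `eᵐˣ F`, so
`2 I² - I³` has generating function `e²ˣ (2 - eˣ) F = e²ˣ`.
-/

open Nat PowerSeries

theorem stirling2_eq_stirlingSecond : stirling2 = stirlingSecond := by
  funext n k
  induction n generalizing k with
  | zero => cases k <;> rfl
  | succ n ih => cases k <;> simp only [stirling2, stirlingSecond, ih]

def surjCount (n k : ℕ) : ℕ := stirling2 n k * k !

theorem surjCount_zero_right (n : ℕ) : surjCount n 0 = if n = 0 then 1 else 0 := by
  cases n <;> rfl

theorem surjCount_succ_left (n k : ℕ) :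
    surjCount (n + 1) k = k * (surjCount n k + surjCount n (k - 1)) := by
  cases k with
  | zero => rw [zero_mul]; rfl
  | succ k =>
    simp only [surjCount, stirling2, factorial_succ, Nat.add_sub_cancel]
    ring

theorem surjCount_eq_zero_of_lt {n k : ℕ} (h : n < k) : surjCount n k = 0 := by
  rw [surjCount, stirling2_eq_stirlingSecond, stirlingSecond_eq_zero_of_lt h, zero_mul]

theorem sum_choose_mul_surjCount (n k : ℕ) :
    ∑ j ∈ range (n + 1), n.choose j * surjCount j k = surjCount n k + surjCount n (k + 1) := by
  induction n generalizing k with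
  | zero => simp [surjCount_eq_zero_of_lt k.succ_pos]
  | succ n ih =>
    have pascal := sum_choose_succ_mul (fun i _ => surjCount i k) n
    simp only [Nat.cast_id] at pascal
    simp only [pascal, surjCount_succ_left, mul_add, mul_left_comm _ k, sum_add_distrib,
      ← mul_sum, ih]
    cases k <;> simp only [zero_mul, add_zero, Nat.add_sub_cancel] <;> ring

theorem fubini_eq_sum_surjCount {n N : ℕ} (h : n ≤ N) :
    fubini n = ∑ k ∈ range (N + 1), surjCount n k :=
  sum_subset (range_subset_range.mpr (by omega)) fun k _ hk =>
    surjCount_eq_zero_of_lt (by simpa using hk)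

theorem sum_choose_mul_fubini (n : ℕ) :
    ∑ j ∈ range (n + 1), n.choose j * fubini j + (if n = 0 then 1 else 0) = 2 * fubini n := by
  have hsplit : ∀ j ∈ range (n + 1), n.choose j * fubini j =
      ∑ k ∈ range (n + 1), n.choose j * surjCount j k := fun j hj => by
    rw [fubini_eq_sum_surjCount (by simpa [Nat.lt_succ_iff] using hj), mul_sum]
  rw [sum_congr rfl hsplit, sum_comm]
  simp only [sum_choose_mul_surjCount]
  rw [sum_add_distrib, ← surjCount_zero_right, add_assoc, ← sum_range_succ',
    ← fubini_eq_sum_surjCount le_rfl, ← fubini_eq_sum_surjCount n.le_succ, two_mul]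

section ExponentialGeneratingFunction

variable {K : Type*} [Field K]

noncomputable def egf (a : ℕ → K) : K⟦X⟧ := mk fun n => a n / n !

theorem coeff_egf (a : ℕ → K) (n : ℕ) : coeff n (egf a) = a n / n ! := coeff_mk _ _

theorem egf_injective [CharZero K] : Function.Injective (egf : (ℕ → K) → K⟦X⟧) := fun a b h => by
  funext n
  have hn := congrArg (coeff n) h
  rwa [coeff_egf, coeff_egf, div_left_inj' (Nat.cast_ne_zero.mpr (factorial_ne_zero n))] at hn

theorem egf_add (a b : ℕ → K) : egf (fun n => a n + b n) = egf a + egf b := by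
  ext n
  simp only [coeff_egf, map_add, add_div]

theorem egf_const_mul (c : K) (a : ℕ → K) : egf (fun n => c * a n) = C c * egf a := by
  ext n
  simp only [coeff_egf, coeff_C_mul, mul_div_assoc]

theorem egf_ite_zero : egf (fun n => if n = 0 then (1 : K) else 0) = 1 := by
  ext n
  rcases n with _ | n <;> simp [coeff_egf, coeff_one]

theorem egf_natCast_pow [Algebra ℚ K] (m : ℕ) : egf (fun n => (m : K) ^ n) = exp K ^ m := by
  ext n
  simp [coeff_egf, exp_pow_eq_rescale_exp, coeff_exp, div_eq_mul_inv]

theorem egf_mul [CharZero K] (a b : ℕ → K) :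
    egf a * egf b = egf fun n => ∑ k ∈ range (n + 1), n.choose k * a k * b (n - k) := by
  ext n
  rw [coeff_mul, Nat.sum_antidiagonal_eq_sum_range_succ_mk]
  simp only [coeff_egf, sum_div]
  refine sum_congr rfl fun k hk => ?_
  have hk : k ≤ n := Nat.lt_succ_iff.mp (mem_range.mp hk)
  have hchoose : (n.choose k : K) ≠ 0 := cast_ne_zero.mpr (choose_pos hk).ne'
  rw [← choose_mul_factorial_mul_factorial hk]
  push_cast
  field_simp

end ExponentialGeneratingFunction

theorem egf_fubini_mul_two_sub_exp :
    egf (fun n => (fubini n : ℚ)) * (2 - exp ℚ) = 1 := by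
  have hrec : egf (fun n => 2 * (fubini n : ℚ)) =
      egf (fun n => (fubini n : ℚ)) * egf (fun n => ((1 : ℕ) : ℚ) ^ n) +
        egf (fun n => if n = 0 then 1 else 0) := by
    rw [egf_mul, ← egf_add]
    congr
    funext n
    simp only [Nat.cast_one, one_pow, mul_one]
    exact_mod_cast (sum_choose_mul_fubini n).symm
  rw [egf_const_mul, egf_natCast_pow, egf_ite_zero, pow_one, map_ofNat] at hrec
  linear_combination hrec

theorem egf_restrictedBarred (m : ℕ) :
    egf (fun n => (restrictedBarred n m : ℚ)) = exp ℚ ^ m * egf (fun n => (fubini n : ℚ)) := by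
  rw [← egf_natCast_pow, egf_mul]
  simp [restrictedBarred]

theorem restricted_two_three (n : ℕ) :
    2 * restrictedBarred n 2 - 2 ^ n = restrictedBarred n 3 := by
  have hegf : egf (fun k => 2 * (restrictedBarred k 2 : ℚ)) =
      egf (fun k => (restrictedBarred k 3 : ℚ) + ((2 : ℕ) : ℚ) ^ k) := by
    rw [egf_const_mul, egf_add, egf_natCast_pow, egf_restrictedBarred, egf_restrictedBarred,
      map_ofNat]
    linear_combination exp ℚ ^ 2 * egf_fubini_mul_two_sub_exp
  have h : 2 * restrictedBarred n 2 = restrictedBarred n 3 + 2 ^ n := by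
    exact_mod_cast congrFun (egf_injective hegf) n
  omega
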